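/- Assume the loss ℓ has values in [0,1]. Let δ > 0, p ∈ ℕ, and s(n,δ,p) = √( ln((1+n^{2p+1})/δ) / (2n) ). Then with probability at least 1 − δ in x ∼ μ^n, for all r ∈ ℝ: φ(r + s(n,δ,p)) ≥ φ̂(r, x) − n^{−p} s(n,δ,p). -/

import Mathlib

open MeasureTheory Real Filter

noncomputable section

variable {H X : Type*} [MeasurableSpace H] [MeasurableSpace X]

/-- Empirical loss of hypothesis `h` on sample `x`. -/
def empLoss (ℓ : H → X → ℝ) (n : ℕ) (h : H) (x : Fin n → X) : ℝ :=
  (∑ i, ℓ h (x i)) / n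

/-- True (expected) loss of hypothesis `h`. -/
def trueLoss (ℓ : H → X → ℝ) (μ : Measure X) (h : H) : ℝ :=
  ∫ z, ℓ h z ∂μ

/-- Partition function of the Gibbs posterior. -/
def partitionZ (ℓ : H → X → ℝ) (pr : Measure H) (n : ℕ) (β : ℝ) (x : Fin n → X) : ℝ :=
  ∫ h, Real.exp (-β * empLoss ℓ n h x) ∂pr

/-- Gibbs posterior at inverse temperature `β`. -/
def gibbs (ℓ : H → X → ℝ) (pr : Measure H) (n : ℕ) (β : ℝ) (x : Fin n → X) : Measure H :=
  pr.withDensity fun h =>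
    ENNReal.ofReal (Real.exp (-β * empLoss ℓ n h x) / partitionZ ℓ pr n β x)

/-- Joint measure ρ of the sample and the Gibbs draw, on H × Xⁿ. -/
def jointRho (ℓ : H → X → ℝ) (μ : Measure X) (pr : Measure H) (n : ℕ) (β : ℝ) :
    Measure (H × (Fin n → X)) :=
  (Measure.pi fun _ : Fin n => μ).bind fun x => (gibbs ℓ pr n β x).map fun h => (h, x)

/-- Cumulative distribution function of the empirical loss under the prior. -/
def phiHat (ℓ : H → X → ℝ) (pr : Measure H) (n : ℕ) (r : ℝ) (x : Fin n → X) : ℝ :=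
  (pr {g | empLoss ℓ n g x ≤ r}).toReal

/-- Complexity measure Λ_β(h,x). -/
def Lam (ℓ : H → X → ℝ) (pr : Measure H) (n : ℕ) (β : ℝ) (h : H) (x : Fin n → X) : ℝ :=
  sInf {v : ℝ | ∃ r : ℝ, 0 < phiHat ℓ pr n (empLoss ℓ n h x + r) x ∧
    v = β * r + Real.log (1 / phiHat ℓ pr n (empLoss ℓ n h x + r) x)}

/-- Relative entropy of two Bernoulli variables. -/
def klBin (p q : ℝ) : ℝ :=
  p * Real.log (p / q) + (1 - p) * Real.log ((1 - p) / (1 - q))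

/-!
By Hoeffding's inequality, each fixed hypothesis `g` is overfitted by the sample, in the sense
`L̂(g, x) + s ≤ L(g)`, with probability at most `exp (-2 n s²) = δ / (1 + N)`, `N = n^(2p+1)`.
By Fubini the prior mass `B(x)` of the overfitted hypotheses has the same bound in expectation,
so by Markov `B(x) < n^(-p) s` outside an event of probability at most `δ`; this uses
`s (1 + N) ≥ n^p`, which holds because `(1 + N)² ≥ 4N` and `2 n s² = log ((1 + N) / δ) > 1/2`.
Finally `φ̂(r, x) ≤ φ(r + s) + B(x)`, since a hypothesis with `L̂ ≤ r` either has `L ≤ r + s`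
or is overfitted.
-/

open ProbabilityTheory Set
open scoped ENNReal

theorem measureReal_pi_sampleMean_add_le_integral_le (μ : Measure X) [IsProbabilityMeasure μ]
    {f : X → ℝ} (hf : Measurable f) {a b : ℝ} (hab : ∀ z, f z ∈ Icc a b)
    {n : ℕ} (hn : 0 < n) {s : ℝ} (hs : 0 ≤ s) :
    (Measure.pi fun _ : Fin n => μ).real {x | (∑ i, f (x i)) / n + s ≤ ∫ z, f z ∂μ} ≤
      exp (-2 * n * s ^ 2 / (b - a) ^ 2) := by
  have hdev : HasSubgaussianMGF (fun z => (∫ z, f z ∂μ) - f z) ((‖b - a‖₊ / 2) ^ 2) μ := by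
    have h := hasSubgaussianMGF_of_mem_Icc (μ := μ) (X := fun z => -f z) (a := -b) (b := -a)
      hf.neg.aemeasurable (ae_of_all _ fun z => ⟨neg_le_neg (hab z).2, neg_le_neg (hab z).1⟩)
    rw [neg_sub_neg] at h
    refine h.congr (ae_of_all _ fun z => ?_)
    simp only [integral_neg]
    ring
  have hsample (i : Fin n) : HasSubgaussianMGF (fun x : Fin n → X => (∫ z, f z ∂μ) - f (x i))
      ((‖b - a‖₊ / 2) ^ 2) (Measure.pi fun _ : Fin n => μ) := by
    refine HasSubgaussianMGF.of_map (X := fun z => (∫ z, f z ∂μ) - f z)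
      (measurable_pi_apply i).aemeasurable ?_
    rwa [(measurePreserving_eval (fun _ : Fin n => μ) i).map_eq]
  have hindep : iIndepFun (fun i (x : Fin n → X) => (∫ z, f z ∂μ) - f (x i))
      (Measure.pi fun _ : Fin n => μ) :=
    iIndepFun_pi (X := fun _ z => (∫ z, f z ∂μ) - f z) fun _ => (hf.const_sub _).aemeasurable
  have hsum := HasSubgaussianMGF.measure_sum_ge_le_of_iIndepFun hindep (s := Finset.univ)
    (fun i _ => hsample i) (mul_nonneg (Nat.cast_nonneg n) hs)
  have hnpos : (0 : ℝ) < n := Nat.cast_pos.2 hn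
  convert hsum using 2
  · ext x
    simp only [mem_ofPred_eq, Finset.sum_sub_distrib, Finset.sum_const, Finset.card_univ,
      Fintype.card_fin, nsmul_eq_mul]
    rw [div_add' _ _ _ hnpos.ne', div_le_iff₀ hnpos]
    constructor <;> intro h <;> linarith
  · simp only [Finset.sum_const, Finset.card_univ, Fintype.card_fin, nsmul_eq_mul]
    push_cast
    rw [Real.norm_eq_abs, div_pow, sq_abs]
    rcases eq_or_ne (b - a) 0 with hba | hba
    · simp [hba]
    · field_simp

theorem measure_le_measure_prodMk_preimage_le {Ω Θ : Type*} [MeasurableSpace Ω]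
    [MeasurableSpace Θ] (μ : Measure Ω) [SFinite μ] (ν : Measure Θ) [IsProbabilityMeasure ν]
    {C : Set (Ω × Θ)} (hC : MeasurableSet C) {ε : ℝ≥0∞}
    (hε : ∀ θ, μ ((fun ω => (ω, θ)) ⁻¹' C) ≤ ε) {a : ℝ≥0∞} (ha₀ : a ≠ 0) (ha : a ≠ ∞) :
    μ {ω | a ≤ ν (Prod.mk ω ⁻¹' C)} ≤ ε / a := by
  refine (meas_ge_le_lintegral_div (measurable_measure_prodMk_left hC).aemeasurable ha₀ ha).trans ?_
  gcongr
  calc ∫⁻ ω, ν (Prod.mk ω ⁻¹' C) ∂μ = ∫⁻ θ, μ ((fun ω => (ω, θ)) ⁻¹' C) ∂ν := by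
        rw [← Measure.prod_apply hC, Measure.prod_apply_symm hC]
    _ ≤ ∫⁻ _, ε ∂ν := lintegral_mono hε
    _ = ε := by simp

theorem exp_neg_two_mul_sqrt_log_div_sq {n : ℕ} (hn : 0 < n) {c : ℝ} (hc : 1 ≤ c) :
    exp (-2 * n * sqrt (log c / (2 * n)) ^ 2) = c⁻¹ := by
  have hnpos : (0 : ℝ) < n := Nat.cast_pos.2 hn
  rw [sq_sqrt (div_nonneg (log_nonneg hc) (by positivity))]
  rw [show -2 * (n : ℝ) * (log c / (2 * n)) = -log c by field_simp, exp_neg,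
    exp_log (by linarith)]

theorem pow_le_sqrt_log_div_mul {n : ℕ} (hn : 0 < n) {δ : ℝ} (hδ : 0 < δ) (hδ1 : δ ≤ 1) (p : ℕ) :
    (n : ℝ) ^ p ≤
      sqrt (log ((1 + (n : ℝ) ^ (2 * p + 1)) / δ) / (2 * n)) * (1 + (n : ℝ) ^ (2 * p + 1)) := by
  set N : ℝ := (n : ℝ) ^ (2 * p + 1)
  have hnpos : (0 : ℝ) < n := Nat.cast_pos.2 hn
  have hN : 1 ≤ N := one_le_pow₀ (Nat.one_le_cast.2 hn)
  have hlog : 1 / 2 ≤ log ((1 + N) / δ) := by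
    have h2 : log 2 ≤ log ((1 + N) / δ) :=
      log_le_log two_pos (by rw [le_div_iff₀ hδ]; nlinarith)
    linarith [log_two_gt_d9]
  set L : ℝ := log ((1 + N) / δ)
  rw [← pow_le_pow_iff_left₀ (by positivity) (by positivity) two_ne_zero, mul_pow,
    sq_sqrt (by positivity)]
  have hamgm : 4 * N ≤ (1 + N) ^ 2 := by nlinarith [sq_nonneg (1 - N)]
  calc ((n : ℝ) ^ p) ^ 2 = 1 / 2 / (2 * n) * (4 * N) := by field_simp; ring
    _ ≤ L / (2 * n) * (1 + N) ^ 2 := by gcongr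

theorem phiHat_le_add (ℓ : H → X → ℝ) (μ : Measure X) (pr : Measure H) [IsFiniteMeasure pr]
    (n : ℕ) (x : Fin n → X) (r s : ℝ) :
    phiHat ℓ pr n r x ≤
      (pr {g | trueLoss ℓ μ g ≤ r + s}).toReal +
        (pr {g | empLoss ℓ n g x + s ≤ trueLoss ℓ μ g}).toReal := by
  refine (measureReal_mono fun g (hg : empLoss ℓ n g x ≤ r) => ?_).trans (measureReal_union_le _ _)
  by_cases h : trueLoss ℓ μ g ≤ r + s
  · exact Or.inl h
  · exact Or.inr (show empLoss ℓ n g x + s ≤ trueLoss ℓ μ g by linarith)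

theorem measurable_empLoss {ℓ : H → X → ℝ} (hℓ : Measurable (Function.uncurry ℓ)) (n : ℕ) :
    Measurable fun q : (Fin n → X) × H => empLoss ℓ n q.2 q.1 := by
  refine Measurable.div_const (Finset.measurable_sum _ fun i _ => ?_) _
  exact hℓ.comp (measurable_snd.prodMk ((measurable_pi_apply i).comp measurable_fst))

theorem measurable_trueLoss {ℓ : H → X → ℝ} (hℓ : Measurable (Function.uncurry ℓ))
    (μ : Measure X) [SFinite μ] : Measurable (trueLoss ℓ μ) :=
  hℓ.stronglyMeasurable.integral_prod_right'.measurable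

theorem one_sub_div_le_measure_phiHat_sub_le (μ : Measure X) [IsProbabilityMeasure μ]
    (pr : Measure H) [IsProbabilityMeasure pr] {ℓ : H → X → ℝ}
    (hmeas : Measurable (Function.uncurry ℓ)) (n : ℕ) (s : ℝ) {a : ℝ} (ha : 0 < a) {ε : ℝ≥0∞}
    (hε : ∀ g, (Measure.pi fun _ : Fin n => μ) {x | empLoss ℓ n g x + s ≤ trueLoss ℓ μ g} ≤ ε) :
    1 - ε / ENNReal.ofReal a ≤ (Measure.pi fun _ : Fin n => μ) {x | ∀ r : ℝ,
      phiHat ℓ pr n r x - a ≤ (pr {g | trueLoss ℓ μ g ≤ r + s}).toReal} := by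
  set C : Set ((Fin n → X) × H) := {q | empLoss ℓ n q.2 q.1 + s ≤ trueLoss ℓ μ q.2}
  have hC : MeasurableSet C :=
    measurableSet_le ((measurable_empLoss hmeas n).add_const s)
      ((measurable_trueLoss hmeas μ).comp measurable_snd)
  set bad := {x | ENNReal.ofReal a ≤ pr (Prod.mk x ⁻¹' C)}
  have hbad : MeasurableSet bad :=
    measurableSet_le measurable_const (measurable_measure_prodMk_left hC)
  have hgood : badᶜ ⊆ {x | ∀ r : ℝ,
      phiHat ℓ pr n r x - a ≤ (pr {g | trueLoss ℓ μ g ≤ r + s}).toReal} := by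
    intro x hx r
    have hx : (pr {g | empLoss ℓ n g x + s ≤ trueLoss ℓ μ g}).toReal < a :=
      (ENNReal.lt_ofReal_iff_toReal_lt (measure_ne_top _ _)).1 (not_le.1 hx)
    linarith [phiHat_le_add ℓ μ pr n x r s]
  calc 1 - ε / ENNReal.ofReal a ≤ 1 - (Measure.pi fun _ : Fin n => μ) bad :=
        tsub_le_tsub_left (measure_le_measure_prodMk_preimage_le _ pr hC hε
          (ENNReal.ofReal_pos.2 ha).ne' ENNReal.ofReal_ne_top) 1
    _ = (Measure.pi fun _ : Fin n => μ) badᶜ := (prob_compl_eq_one_sub hbad).symm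
    _ ≤ _ := measure_mono hgood

theorem statement13
    (μ : Measure X) [IsProbabilityMeasure μ]
    (pr : Measure H) [IsProbabilityMeasure pr]
    (ℓ : H → X → ℝ) (hmeas : Measurable (Function.uncurry ℓ))
    (hrange : ∀ h z, ℓ h z ∈ Set.Icc (0 : ℝ) 1)
    (n : ℕ) (hn : 0 < n) (δ : ℝ) (hδ : 0 < δ) (p : ℕ) :
    ENNReal.ofReal (1 - δ) ≤
      (Measure.pi fun _ : Fin n => μ) {x : Fin n → X | ∀ r : ℝ,
        phiHat ℓ pr n r x
            - ((n : ℝ) ^ p)⁻¹ * Real.sqrt (Real.log ((1 + (n : ℝ) ^ (2 * p + 1)) / δ) / (2 * n)) ≤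
          (pr {g | trueLoss ℓ μ g ≤
            r + Real.sqrt (Real.log ((1 + (n : ℝ) ^ (2 * p + 1)) / δ) / (2 * n))}).toReal} := by
  obtain hδ1 | hδ1 := le_or_gt 1 δ
  · simp [ENNReal.ofReal_of_nonpos (sub_nonpos.2 hδ1)]
  set N : ℝ := (n : ℝ) ^ (2 * p + 1)
  set s := sqrt (log ((1 + N) / δ) / (2 * n))
  have hN : 1 ≤ 1 + N := by simp [N]
  have hs : (n : ℝ) ^ p ≤ s * (1 + N) := pow_le_sqrt_log_div_mul hn hδ hδ1.le p
  have ha : 0 < ((n : ℝ) ^ p)⁻¹ * s := by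
    have : 0 < log ((1 + N) / δ) := log_pos ((one_lt_div hδ).2 (by linarith))
    positivity
  have hoverfit (g : H) : (Measure.pi fun _ : Fin n => μ)
      {x | empLoss ℓ n g x + s ≤ trueLoss ℓ μ g} ≤ ENNReal.ofReal ((1 + N) / δ)⁻¹ := by
    rw [ENNReal.le_ofReal_iff_toReal_le (measure_ne_top _ _) (by positivity),
      ← exp_neg_two_mul_sqrt_log_div_sq hn ((one_le_div hδ).2 (by linarith))]
    have h := measureReal_pi_sampleMean_add_le_integral_le μ (f := ℓ g)
      (hmeas.comp measurable_prodMk_left) (hrange g) hn (s := s) (sqrt_nonneg _)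
    rwa [sub_zero, one_pow, div_one] at h
  have hδa : ((1 + N) / δ)⁻¹ / (((n : ℝ) ^ p)⁻¹ * s) ≤ δ := by
    rw [inv_div, div_le_iff₀ ha, div_le_iff₀ (by positivity)]
    calc δ = δ * ((n : ℝ) ^ p)⁻¹ * (n : ℝ) ^ p := by field_simp
      _ ≤ δ * ((n : ℝ) ^ p)⁻¹ * (s * (1 + N)) := by gcongr
      _ = δ * (((n : ℝ) ^ p)⁻¹ * s) * (1 + N) := by ring
  calc ENNReal.ofReal (1 - δ)
        ≤ 1 - ENNReal.ofReal ((1 + N) / δ)⁻¹ / ENNReal.ofReal (((n : ℝ) ^ p)⁻¹ * s) := by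
        rw [← ENNReal.ofReal_div_of_pos ha, ENNReal.ofReal_sub _ hδ.le, ENNReal.ofReal_one]
        gcongr
    _ ≤ _ := one_sub_div_le_measure_phiHat_sub_le μ pr hmeas n s ha hoverfit
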